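/- arXiv:1312.2459 — 4 statements merged into one kernel-verified Lean document; each statement's English description precedes it below -/
import Mathlib

section
/- Let X be a finite set and D : X × X → [0,∞] an anti-reflexive matrix (d_ii = 0). Define the metric powers D^{mc,n} using the composition (D ∘ E)_{ij} = min_k (d_ik + e_kj), and the ultra-metric powers D^{um,n} using the composition (D ∘ E)_{ij} = min_k max(d_ik, e_kj). Then for every n ≥ 1 and all i, j: d^{mc,n}_{ij} ≥ d^{um,n}_{ij}. Consequently, if P is a reflexive symmetric matrix with entries in [0,1], D = Φ(P) its image under a proximity-to-distance isomorphism φ, P^{mc} and P^{um} the entrywise preimages under φ of the metric and ultra-metric closures of D, and distortion is defined by Δ(P') = Σ_i Σ_j |p'_{ij} − p_{ij}|, then Δ(P^{um}) ≥ Δ(P^{mc}). -/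
open scoped ENNReal

/-- Iterated application of a binary operation `op` (with seed `e`) over a finite index set. -/
noncomputable def iterOp {X α : Type*} [Fintype X] (op : α → α → α) (e : α) (h : X → α) : α :=
  (Finset.univ.toList.map h).foldr op e

/-- Composition of matrices over a finite index set: `(D ∘ E) i j = f_k g (D i k) (E k j)`,
where `f_k` is the iterated application of `f` (with seed `e`). -/
noncomputable def gcomp {X α : Type*} [Fintype X] (f g : α → α → α) (e : α)
    (D E : X → X → α) : X → X → α :=
  fun i j => iterOp f e fun k => g (D i k) (E k j)

/-- Matrix powers: `gpow f g e D n` is the `(n+1)`-st power `D^(n+1)`,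
with `D¹ = D` and `D^(n+1) = D ∘ Dⁿ`. -/
noncomputable def gpow {X α : Type*} [Fintype X] (f g : α → α → α) (e : α) (D : X → X → α) :
    ℕ → X → X → α
  | 0 => D
  | n + 1 => gcomp f g e D (gpow f g e D n)

/-- The metric power: `⟨f, g⟩ = ⟨min, +⟩`. -/
noncomputable def metricPow {X : Type*} [Fintype X] (D : X → X → ℝ≥0∞) : ℕ → X → X → ℝ≥0∞ :=
  gpow min (· + ·) ⊤ D

/-- The ultra-metric power: `⟨f, g⟩ = ⟨min, max⟩`. -/
noncomputable def ultraPow {X : Type*} [Fintype X] (D : X → X → ℝ≥0∞) : ℕ → X → X → ℝ≥0∞ :=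
  gpow min max ⊤ D

/-- The distortion `Δ(P') = Σᵢ Σⱼ |p'ᵢⱼ − pᵢⱼ|` of a matrix `P'` w.r.t. `P`. -/
noncomputable def distortion {X : Type*} [Fintype X] (P' P : X → X → unitInterval) : ℝ :=
  ∑ i, ∑ j, |(P' i j : ℝ) - (P i j : ℝ)|

lemma fold_min_mono {α : Type*} [LinearOrder α] {β : Type*} (l : List β) (h₁ h₂ : β → α)
    (hle : ∀ k, h₁ k ≤ h₂ k) (e : α) :
    (l.map h₁).foldr min e ≤ (l.map h₂).foldr min e := by
  induction l with
  | nil => simp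
  | cons a l ih => simpa using min_le_min (hle a) ih

lemma invFun_ge {φ : unitInterval → ℝ≥0∞} (hanti : StrictAnti φ)
    (hbij : Function.Bijective φ) {x : unitInterval} {a : ℝ≥0∞} (ha : a ≤ φ x) :
    x ≤ Function.invFun φ a := by
  obtain ⟨y, rfl⟩ := hbij.2 a
  rw [Function.leftInverse_invFun hbij.1]
  by_contra h
  push_neg at h
  exact absurd ha (not_le.mpr (hanti h))

lemma invFun_anti {φ : unitInterval → ℝ≥0∞} (hanti : StrictAnti φ)
    (hbij : Function.Bijective φ) {a b : ℝ≥0∞} (hab : b ≤ a) :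
    Function.invFun φ a ≤ Function.invFun φ b := by
  obtain ⟨u, rfl⟩ := hbij.2 a
  obtain ⟨v, rfl⟩ := hbij.2 b
  rw [Function.leftInverse_invFun hbij.1, Function.leftInverse_invFun hbij.1]
  by_contra h
  push_neg at h
  exact absurd hab (not_le.mpr (hanti h))

/-- (a) for any anti-reflexive `D' : X × X → [0,∞]` on a finite set, the metric
powers dominate the ultra-metric powers entrywise, for every `n ≥ 1` (here `gpow … n = Dⁿ⁺¹`);
(b) consequently, if `P` is a reflexive symmetric proximity matrix, `D = Φ(P)` via a
proximity-to-distance isomorphism `φ`, and `P^mc`, `P^um` are the entrywise `φ`-preimages of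
the metric and ultra-metric closures of `D` (entrywise infimum of all powers), then the
distortion satisfies `Δ(P^um) ≥ Δ(P^mc)`. -/
theorem stmt_9 {X : Type*} [Fintype X]
    (φ : unitInterval → ℝ≥0∞)
    (hanti : StrictAnti φ) (hbij : Function.Bijective φ)
    (hone : φ 1 = 0) (hzero : φ 0 = ⊤)
    (P : X → X → unitInterval)
    (hrefl : ∀ i, P i i = 1) (hsymm : ∀ i j, P i j = P j i)
    (D : X → X → ℝ≥0∞) (hD : ∀ i j, D i j = φ (P i j))
    (Pmc Pum : X → X → unitInterval)
    (hPmc : ∀ i j, Pmc i j = Function.invFun φ (⨅ n, metricPow D n i j))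
    (hPum : ∀ i j, Pum i j = Function.invFun φ (⨅ n, ultraPow D n i j)) :
    (∀ (D' : X → X → ℝ≥0∞), (∀ i, D' i i = 0) →
      ∀ n i j, ultraPow D' n i j ≤ metricPow D' n i j) ∧
    distortion Pmc P ≤ distortion Pum P := by
  have partA : ∀ (D' : X → X → ℝ≥0∞), (∀ i, D' i i = 0) →
      ∀ n i j, ultraPow D' n i j ≤ metricPow D' n i j := by
    intro D' _ n
    induction n with
    | zero => intro i j; exact le_refl _
    | succ n ih =>
      intro i j
      apply fold_min_mono
      intro k
      exact max_le le_self_add (le_trans (ih k j) le_add_self)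
  refine ⟨partA, ?_⟩
  have hum_le_mc : ∀ i j, (⨅ n, ultraPow D n i j) ≤ ⨅ n, metricPow D n i j := by
    intro i j
    exact le_iInf fun n => (iInf_le _ n).trans (partA D (fun i => by rw [hD, hrefl, hone]) n i j)
  have hmc_le_D : ∀ i j, (⨅ n, metricPow D n i j) ≤ φ (P i j) := by
    intro i j
    have := iInf_le (fun n => metricPow D n i j) 0
    rwa [show metricPow D 0 i j = φ (P i j) from (hD i j ▸ rfl)] at this
  have hP_le_mc : ∀ i j, P i j ≤ Pmc i j := by
    intro i j
    rw [hPmc]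
    exact invFun_ge hanti hbij (hmc_le_D i j)
  have hmc_le_um : ∀ i j, Pmc i j ≤ Pum i j := by
    intro i j
    rw [hPmc, hPum]
    exact invFun_anti hanti hbij (hum_le_mc i j)
  unfold distortion
  refine Finset.sum_le_sum fun i _ => Finset.sum_le_sum fun j _ => ?_
  have h1 : (P i j : ℝ) ≤ (Pmc i j : ℝ) := hP_le_mc i j
  have h2 : (Pmc i j : ℝ) ≤ (Pum i j : ℝ) := hmc_le_um i j
  rw [abs_of_nonneg (by linarith), abs_of_nonneg (by linarith)]
  linarith
end

section
/- There is no involutive fuzzy complement compatible with the metric-closure operations: if c : [0,1] → [0,1] satisfies c(0) = 1, c(1) = 0, and the De Morgan identity c(max(a,b)) = c(a)·c(b) / (c(a) + c(b) − c(a)·c(b)) for all a, b ∈ [0,1] with (c(a), c(b)) ≠ (0,0) (and c(max(a,b)) = 0 when c(a) = c(b) = 0), then c is not involutive, i.e. there exists x ∈ [0,1] with c(c(x)) ≠ x. -/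
/-!
Since `max a a = a`, the De Morgan law makes every value `t = c a` an idempotent of the
Dombi T-norm, and `t² / (2t - t²) = t` forces `t ∈ {0, 1}`. So `c ∘ c` only takes the values
`c 0 = 1` and `c 1 = 0`, and `1 / 2` cannot be a fixed point of it.
-/

lemma eq_zero_or_eq_one_of_mul_self_div_eq {t : ℝ} (h : t * t / (t + t - t * t) = t) :
    t = 0 ∨ t = 1 := by
  by_cases hden : t + t - t * t = 0
  · rw [hden, div_zero] at h
    exact Or.inl h.symm
  · rw [div_eq_iff hden] at h
    have hcube : t * t * (t - 1) = 0 := by linear_combination h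
    rcases mul_eq_zero.mp hcube with ht | ht
    · exact Or.inl (mul_self_eq_zero.mp ht)
    · exact Or.inr (sub_eq_zero.mp ht)

lemma apply_eq_zero_or_eq_one_of_deMorgan {c : ℝ → ℝ}
    (hDM : ∀ a ∈ Set.Icc (0:ℝ) 1, ∀ b ∈ Set.Icc (0:ℝ) 1,
      ¬(c a = 0 ∧ c b = 0) → c (max a b) = c a * c b / (c a + c b - c a * c b))
    {a : ℝ} (ha : a ∈ Set.Icc (0:ℝ) 1) : c a = 0 ∨ c a = 1 := by
  by_cases hca : c a = 0
  · exact Or.inl hca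
  · have hidem := hDM a ha a ha (fun h => hca h.1)
    rw [max_self] at hidem
    exact eq_zero_or_eq_one_of_mul_self_div_eq hidem.symm

theorem stmt_10_general (c : ℝ → ℝ)
    (h0 : c 0 = 1) (h1 : c 1 = 0)
    (hDM : ∀ a ∈ Set.Icc (0:ℝ) 1, ∀ b ∈ Set.Icc (0:ℝ) 1,
      ¬(c a = 0 ∧ c b = 0) →
        c (max a b) = c a * c b / (c a + c b - c a * c b)) :
    ∃ x ∈ Set.Icc (0:ℝ) 1, c (c x) ≠ x := by
  have hhalf : (1 / 2 : ℝ) ∈ Set.Icc (0:ℝ) 1 := by norm_num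
  refine ⟨1 / 2, hhalf, ?_⟩
  rcases apply_eq_zero_or_eq_one_of_deMorgan hDM hhalf with h | h <;> rw [h]
  · rw [h0]; norm_num
  · rw [h1]; norm_num

/-- no involutive fuzzy complement is compatible with the metric-closure
operations. If `c : [0,1] → [0,1]` satisfies `c 0 = 1`, `c 1 = 0`, and the De Morgan identity
`c (max a b) = DT¹_∧ (c a) (c b)` for all `a, b ∈ [0,1]` (with the Dombi T-norm
`DT¹_∧(x,y) = xy/(x+y−xy)` for `(x,y) ≠ (0,0)` and `DT¹_∧(0,0) = 0`), then `c` is not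
involutive: there is `x ∈ [0,1]` with `c (c x) ≠ x`. -/
theorem stmt_10 (c : ℝ → ℝ)
    (hmap : ∀ x ∈ Set.Icc (0:ℝ) 1, c x ∈ Set.Icc (0:ℝ) 1)
    (h0 : c 0 = 1) (h1 : c 1 = 0)
    (hDM : ∀ a ∈ Set.Icc (0:ℝ) 1, ∀ b ∈ Set.Icc (0:ℝ) 1,
      ¬(c a = 0 ∧ c b = 0) →
        c (max a b) = c a * c b / (c a + c b - c a * c b))
    (hDM0 : ∀ a ∈ Set.Icc (0:ℝ) 1, ∀ b ∈ Set.Icc (0:ℝ) 1,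
      (c a = 0 ∧ c b = 0) → c (max a b) = 0) :
    ∃ x ∈ Set.Icc (0:ℝ) 1, c (c x) ≠ x :=
  stmt_10_general c h0 h1 hDM
end

section
/- Let λ > 0. If De Morgan's law with the standard complement holds between the Dombi T-conorm DT^λ_∨ and the Dombi T-norm DT¹_∧, i.e. for all a, b ∈ (0,1): 1 − DT¹_∧(a,b) = DT^λ_∨(1−a, 1−b), equivalently −ab·[(1/a − 1)^λ + (1/b − 1)^λ]^{1/λ} + a + b − 2ab = 0 for all a, b ∈ (0,1), then λ = 1. -/
/-- if, for `λ > 0`, De Morgan's law with the standard complement holds between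
the Dombi T-conorm `DT^λ_∨` and the Dombi T-norm `DT¹_∧`, i.e. (equivalently) for all
`a, b ∈ (0,1)`: `−ab·[(1/a − 1)^λ + (1/b − 1)^λ]^{1/λ} + a + b − 2ab = 0`, then `λ = 1`. -/
theorem stmt_12 (lam : ℝ) (hlam : 0 < lam)
    (hDM : ∀ a b : ℝ, a ∈ Set.Ioo (0:ℝ) 1 → b ∈ Set.Ioo (0:ℝ) 1 →
      -(a * b) * ((1 / a - 1) ^ lam + (1 / b - 1) ^ lam) ^ (1 / lam)
        + a + b - 2 * a * b = 0) :
    lam = 1 := by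
  have h := hDM (1/2) (1/2) (by norm_num) (by norm_num)
  have h1 : (1 / (1/2 : ℝ) - 1) = 1 := by norm_num
  rw [h1, Real.one_rpow] at h
  have h2 : ((1:ℝ) + 1) ^ (1 / lam) = 2 := by nlinarith [h]
  have h3 : (2:ℝ) ^ (1/lam) = (2:ℝ) ^ (1:ℝ) := by
    rw [Real.rpow_one]; rw [show ((1:ℝ)+1) = 2 by norm_num] at h2; exact h2
  have h4 : 1 / lam = 1 := by
    by_contra hne
    rcases lt_or_gt_of_ne hne with hlt | hgt
    · have := Real.rpow_lt_rpow_left_iff (x := 2) (by norm_num) |>.mpr hlt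
      linarith [h3 ▸ this]
    · have := Real.rpow_lt_rpow_left_iff (x := 2) (by norm_num) |>.mpr hgt
      linarith [h3 ▸ this]
  field_simp at h4
  linarith
end

section
/- Let φ₁(p) = 1/p − 1 with φ₁(0) = ∞ and inverse φ₁⁻¹(x) = 1/(x+1), φ₁⁻¹(∞) = 0. Then for all x, y ∈ (0,∞): φ₁(DT¹_∨(φ₁⁻¹(x), φ₁⁻¹(y))) = xy/(x + y) = 1/(1/x + 1/y); moreover the induced operation f satisfies f(0,0) = 0, f(x,∞) = x and f(∞,y) = y. That is, under the isomorphism φ₁, the Dombi T-conorm with λ = 1 corresponds exactly to the harmonic combination f(x,y) = xy/(x+y) of distances, which underlies the diffusion distance closure. -/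
open scoped ENNReal

/-- The proximity-to-distance map `φ₁ p = 1/p − 1`, with `φ₁ 0 = ∞`. -/
noncomputable def phi1 (p : ℝ) : ℝ≥0∞ := if p = 0 then ⊤ else ENNReal.ofReal (1 / p - 1)

/-- The inverse map `φ₁⁻¹ x = 1/(x+1)`, with `φ₁⁻¹ ∞ = 0`. -/
noncomputable def psi1 (x : ℝ≥0∞) : ℝ := if x = ⊤ then 0 else 1 / (x.toReal + 1)

/-- The Dombi T-conorm with λ = 1: `DT¹_∨(a,b) = (a+b−2ab)/(1−ab)` for `(a,b) ≠ (1,1)`,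
and `DT¹_∨(1,1) = 1`. -/
noncomputable def dombiTconorm (a b : ℝ) : ℝ :=
  if a = 1 ∧ b = 1 then 1 else (a + b - 2 * a * b) / (1 - a * b)

/-- The induced distance operation `f x y = φ₁ (DT¹_∨ (φ₁⁻¹ x) (φ₁⁻¹ y))`. -/
noncomputable def diffOp (x y : ℝ≥0∞) : ℝ≥0∞ := phi1 (dombiTconorm (psi1 x) (psi1 y))

/-!
Since `φ₁⁻¹ x = 1/(x+1)`, a direct computation gives
`DT¹_∨(1/(s+1), 1/(t+1)) = 1/(st/(s+t) + 1) = φ₁⁻¹(st/(s+t))`, and `φ₁ ∘ φ₁⁻¹ = id` turns this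
into `f x y = xy/(x+y)`. The boundary cases come from `φ₁⁻¹ ∞ = 0` being the unit of the conorm.
-/

theorem ENNReal.mul_div_add_eq_inv_add_inv {x y : ℝ≥0∞} (hx : x ≠ ⊤) (hy : y ≠ ⊤) :
    x * y / (x + y) = (x⁻¹ + y⁻¹)⁻¹ := by
  rcases eq_or_ne x 0 with rfl | hx0
  · simp
  rcases eq_or_ne y 0 with rfl | hy0
  · simp
  lift x to NNReal using hx
  lift y to NNReal using hy
  have hx0' : x ≠ 0 := by exact_mod_cast hx0
  have hy0' : y ≠ 0 := by exact_mod_cast hy0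
  have hxy : x + y ≠ 0 := by positivity
  have hinv : (x⁻¹ + y⁻¹)⁻¹ = x * y / (x + y) := by rw [inv_add_inv hx0' hy0', inv_div]
  calc (x : ℝ≥0∞) * y / (x + y) = ((x * y / (x + y) : NNReal) : ℝ≥0∞) := by
        rw [ENNReal.coe_div hxy, ENNReal.coe_mul, ENNReal.coe_add]
    _ = ((x⁻¹ + y⁻¹)⁻¹ : NNReal) := by rw [hinv]
    _ = ((x : ℝ≥0∞)⁻¹ + (y : ℝ≥0∞)⁻¹)⁻¹ := by
        rw [ENNReal.coe_inv (by positivity), ENNReal.coe_add, ENNReal.coe_inv hx0',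
          ENNReal.coe_inv hy0']

lemma psi1_top : psi1 ⊤ = 0 := by simp [psi1]

lemma psi1_of_ne_top {x : ℝ≥0∞} (hx : x ≠ ⊤) : psi1 x = 1 / (x.toReal + 1) := if_neg hx

lemma dombiTconorm_zero_right (a : ℝ) : dombiTconorm a 0 = a := by simp [dombiTconorm]

lemma dombiTconorm_zero_left (b : ℝ) : dombiTconorm 0 b = b := by simp [dombiTconorm]

lemma phi1_psi1 (x : ℝ≥0∞) : phi1 (psi1 x) = x := by
  rcases eq_or_ne x ⊤ with rfl | hx
  · simp [psi1_top, phi1]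
  · have hne : 1 / (x.toReal + 1) ≠ 0 := by positivity
    rw [psi1_of_ne_top hx, phi1, if_neg hne, one_div_one_div, add_sub_cancel_right,
      ENNReal.ofReal_toReal hx]

-- At `s = t = 0` both sides are `1`, by the convention `DT¹_∨(1,1) = 1` and by `0 / 0 = 0`.
lemma dombiTconorm_one_div_add_one {s t : ℝ} (hs : 0 ≤ s) (ht : 0 ≤ t) :
    dombiTconorm (1 / (s + 1)) (1 / (t + 1)) = 1 / (s * t / (s + t) + 1) := by
  rcases (add_nonneg hs ht).eq_or_lt with hst | hst
  · obtain ⟨rfl, rfl⟩ : s = 0 ∧ t = 0 := ⟨by linarith, by linarith⟩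
    simp [dombiTconorm]
  have hne : ¬(1 / (s + 1) = 1 ∧ 1 / (t + 1) = 1) := by
    rintro ⟨h1, h2⟩
    rw [div_eq_one_iff_eq (by positivity)] at h1 h2
    linarith
  have hden : 1 - 1 / (s + 1) * (1 / (t + 1)) = (s * t + s + t) / ((s + 1) * (t + 1)) := by
    field_simp; ring
  have hnum : 1 / (s + 1) + 1 / (t + 1) - 2 * (1 / (s + 1)) * (1 / (t + 1))
      = (s + t) / ((s + 1) * (t + 1)) := by
    field_simp; ring
  have hrhs : 1 / (s * t / (s + t) + 1) = (s + t) / (s * t + s + t) := by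
    rw [div_add_one hst.ne', one_div_div, add_assoc]
  rw [dombiTconorm, if_neg hne, hnum, hden, hrhs, div_div_div_cancel_right₀ (by positivity)]

lemma psi1_mul_div_add {x y : ℝ≥0∞} (hx : x ≠ ⊤) (hy : y ≠ ⊤) :
    psi1 (x * y / (x + y)) = 1 / (x.toReal * y.toReal / (x.toReal + y.toReal) + 1) := by
  rcases eq_or_ne (x + y) 0 with h | h
  · obtain ⟨rfl, rfl⟩ := add_eq_zero.1 h
    simp [psi1]
  have hfin : x * y / (x + y) ≠ ⊤ := ENNReal.div_ne_top (ENNReal.mul_ne_top hx hy) h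
  rw [psi1_of_ne_top hfin, ENNReal.toReal_div, ENNReal.toReal_mul, ENNReal.toReal_add hx hy]

lemma diffOp_top_right (x : ℝ≥0∞) : diffOp x ⊤ = x := by
  rw [diffOp, psi1_top, dombiTconorm_zero_right, phi1_psi1]

lemma diffOp_top_left (y : ℝ≥0∞) : diffOp ⊤ y = y := by
  rw [diffOp, psi1_top, dombiTconorm_zero_left, phi1_psi1]

theorem diffOp_eq_mul_div_add {x y : ℝ≥0∞} (hx : x ≠ ⊤) (hy : y ≠ ⊤) :
    diffOp x y = x * y / (x + y) := by
  rw [diffOp, psi1_of_ne_top hx, psi1_of_ne_top hy,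
    dombiTconorm_one_div_add_one ENNReal.toReal_nonneg ENNReal.toReal_nonneg,
    ← psi1_mul_div_add hx hy, phi1_psi1]

/-- under the isomorphism `φ₁`, the Dombi T-conorm with λ = 1 corresponds to
the harmonic combination of distances: for `x, y ∈ (0,∞)`,
`φ₁ (DT¹_∨ (φ₁⁻¹ x) (φ₁⁻¹ y)) = xy/(x+y) = 1/(1/x + 1/y)`; moreover the induced operation
satisfies `f 0 0 = 0`, `f x ∞ = x` and `f ∞ y = y`. -/
theorem stmt_16 :
    (∀ x y : ℝ≥0∞, x ≠ 0 → x ≠ ⊤ → y ≠ 0 → y ≠ ⊤ →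
      diffOp x y = x * y / (x + y) ∧ diffOp x y = (x⁻¹ + y⁻¹)⁻¹) ∧
    diffOp 0 0 = 0 ∧
    (∀ x : ℝ≥0∞, diffOp x ⊤ = x) ∧
    (∀ y : ℝ≥0∞, diffOp ⊤ y = y) := by
  have harmonic {x y : ℝ≥0∞} (hx : x ≠ ⊤) (hy : y ≠ ⊤) : diffOp x y = (x⁻¹ + y⁻¹)⁻¹ :=
    (diffOp_eq_mul_div_add hx hy).trans (ENNReal.mul_div_add_eq_inv_add_inv hx hy)
  refine ⟨fun x y _ hx _ hy => ⟨diffOp_eq_mul_div_add hx hy, harmonic hx hy⟩, ?_,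
    diffOp_top_right, diffOp_top_left⟩
  simpa using diffOp_eq_mul_div_add ENNReal.zero_ne_top ENNReal.zero_ne_top
end
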